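/- (Theorem 1, part ii: uniform ultimate boundedness under disturbance.) Let 0 < μ ≤ Λ, 0 < r < 2μ/Λ², and ε̄ ≥ 0. Let H₂ : ℕ → ℝ^{q×q} be symmetric positive-definite matrices with λ_min(H₂(k)) ≥ μ and λ_max(H₂(k)) ≤ Λ for all k, let H₃ : ℕ → ℝ^{n×q} satisfy ‖H₃(k)‖_F ≤ ε̄ for all k, and let the parameter error obey Φ̃(k+1) = Φ̃(k)·(I_q − r·H₂(k)) + r·H₃(k). Then, with c := max(1 − rμ, rΛ − 1), one has 0 ≤ c < 1 and limsup_{k→∞} ‖Φ̃(k)‖_F ≤ r·ε̄/(1 − c); in particular, the parameter error, and hence the identification error e_si(k) = Φ̃(k)ζ̄(k) − ω̄(k) for bounded ζ̄, ω̄, is uniformly ultimately bounded, converging to a bounded region around zero. -/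

import Mathlib

/-!
Right multiplication by `I - r H` acts on each row of `Φ` through the symmetric matrix `I - r H`,
whose eigenvalues `1 - r λᵢ` lie in `[1 - r Λ, 1 - r μ]`; hence it contracts the Frobenius norm by
`c = max (1 - r μ) (r Λ - 1)`, and `c < 1` because `r Λ² < 2 μ ≤ 2 Λ`. The norms then satisfy
the affine recursion `aₖ₊₁ ≤ c aₖ + r ε̄`, whose solutions obey
`aₖ ≤ cᵏ (a₀ - r ε̄/(1 - c)) + r ε̄/(1 - c)`.
-/

open scoped Matrix

attribute [local instance] Matrix.frobeniusNormedAddCommGroup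
attribute [local instance] Matrix.frobeniusNormSMulClass

open Filter Topology WithLp

section AffineRecursion

variable {a : ℕ → ℝ} {c d : ℝ}

theorem le_pow_mul_add_of_le_mul_add (hc : 0 ≤ c) (hc1 : c ≠ 1)
    (h : ∀ k, a (k + 1) ≤ c * a k + d) (k : ℕ) :
    a k ≤ c ^ k * (a 0 - d / (1 - c)) + d / (1 - c) := by
  have hfix : c * (d / (1 - c)) + d = d / (1 - c) := by
    field_simp [sub_ne_zero.2 hc1.symm]
    ring
  induction k with
  | zero => simp
  | succ k ih =>
    calc a (k + 1) ≤ c * a k + d := h k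
      _ ≤ c * (c ^ k * (a 0 - d / (1 - c)) + d / (1 - c)) + d := by gcongr
      _ = c ^ (k + 1) * (a 0 - d / (1 - c)) + d / (1 - c) := by linear_combination hfix

theorem tendsto_pow_mul_add_of_lt_one (hc : 0 ≤ c) (hc1 : c < 1) (x y : ℝ) :
    Tendsto (fun k : ℕ => c ^ k * x + y) atTop (𝓝 y) := by
  simpa using ((tendsto_pow_atTop_nhds_zero_of_lt_one hc hc1).mul_const x).add_const y

theorem limsup_le_div_one_sub_of_le_mul_add (hc : 0 ≤ c) (hc1 : c < 1)
    (hbdd : IsBoundedUnder (· ≥ ·) atTop a) (h : ∀ k, a (k + 1) ≤ c * a k + d) :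
    limsup a atTop ≤ d / (1 - c) := by
  have hlim := tendsto_pow_mul_add_of_lt_one hc hc1 (a 0 - d / (1 - c)) (d / (1 - c))
  calc limsup a atTop
      ≤ limsup (fun k => c ^ k * (a 0 - d / (1 - c)) + d / (1 - c)) atTop :=
        limsup_le_limsup (.of_forall (le_pow_mul_add_of_le_mul_add hc hc1.ne h))
          hbdd.isCoboundedUnder_le hlim.isBoundedUnder_le
    _ = d / (1 - c) := hlim.limsup_eq

theorem isBoundedUnder_le_of_le_mul_add (hc : 0 ≤ c) (hc1 : c < 1)
    (h : ∀ k, a (k + 1) ≤ c * a k + d) : IsBoundedUnder (· ≤ ·) atTop a :=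
  (tendsto_pow_mul_add_of_lt_one hc hc1 _ _).isBoundedUnder_le.mono_le
    (.of_forall (le_pow_mul_add_of_le_mul_add hc hc1.ne h))

end AffineRecursion

theorem abs_one_sub_mul_le_max {r μ Λ t : ℝ} (hr : 0 ≤ r) (hμ : μ ≤ t) (hΛ : t ≤ Λ) :
    |1 - r * t| ≤ max (1 - r * μ) (r * Λ - 1) := by
  rw [abs_le]
  constructor
  · linarith [le_max_right (1 - r * μ) (r * Λ - 1), mul_le_mul_of_nonneg_left hΛ hr]
  · linarith [le_max_left (1 - r * μ) (r * Λ - 1), mul_le_mul_of_nonneg_left hμ hr]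

theorem max_one_sub_mul_sub_one_mem_Ico {r μ Λ : ℝ} (hμ : 0 < μ) (hμΛ : μ ≤ Λ) (hr : 0 < r)
    (hrΛ : r < 2 * μ / Λ ^ 2) : max (1 - r * μ) (r * Λ - 1) ∈ Set.Ico 0 1 := by
  have hΛ : 0 < Λ := hμ.trans_le hμΛ
  have hrΛ2 : r * Λ ^ 2 < 2 * μ := (lt_div_iff₀ (by positivity)).1 hrΛ
  have hrμΛ : r * μ ≤ r * Λ := mul_le_mul_of_nonneg_left hμΛ hr.le
  refine ⟨?_, max_lt (by nlinarith) (by nlinarith)⟩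
  rcases le_total (r * μ) 1 with h | h
  · exact le_max_of_le_left (by linarith)
  · exact le_max_of_le_right (by linarith)

namespace Matrix

variable {ι l m n α 𝕜 : Type*} [Fintype ι] [Fintype l] [Fintype m] [Fintype n] [RCLike 𝕜]

theorem frobenius_norm_sq_eq_sum_norm_sq_row [NormedAddCommGroup α] (M : Matrix m n α) :
    ‖M‖ ^ 2 = ∑ i, ‖toLp 2 (M i)‖ ^ 2 := by
  simp only [PiLp.norm_sq_eq_of_L2]
  rw [frobenius_norm_def, ← Real.rpow_natCast, ← Real.rpow_mul (by positivity)]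
  norm_num

theorem frobenius_norm_mul_le_of_mulVec_le {c : ℝ} (hc : 0 ≤ c) {B : Matrix l m 𝕜}
    (hB : ∀ x, ‖toLp 2 (B *ᵥ x)‖ ≤ c * ‖toLp 2 x‖) (N : Matrix m n 𝕜) :
    ‖B * N‖ ≤ c * ‖N‖ := by
  rw [← frobenius_norm_transpose (B * N), ← frobenius_norm_transpose N]
  refine le_of_sq_le_sq ?_ (by positivity)
  rw [mul_pow, frobenius_norm_sq_eq_sum_norm_sq_row, frobenius_norm_sq_eq_sum_norm_sq_row,
    Finset.mul_sum]
  gcongr with j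
  calc ‖toLp 2 ((B * N)ᵀ j)‖ ^ 2 = ‖toLp 2 (B *ᵥ Nᵀ j)‖ ^ 2 := rfl
    _ ≤ (c * ‖toLp 2 (Nᵀ j)‖) ^ 2 := by gcongr; exact hB _
    _ = c ^ 2 * ‖toLp 2 (Nᵀ j)‖ ^ 2 := mul_pow ..

theorem frobenius_norm_mulVec (M : Matrix m n 𝕜) (x : n → 𝕜) :
    ‖toLp 2 (M *ᵥ x)‖ ≤ ‖M‖ * ‖toLp 2 x‖ := by
  simpa only [← frobenius_norm_replicateCol (ι := Unit), replicateCol_mulVec]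
    using frobenius_norm_mul M (replicateCol Unit x)

variable [DecidableEq n]

theorem IsHermitian.norm_mulVec_le_of_eigenbasis {A : Matrix n n 𝕜} (hA : A.IsHermitian)
    (b : OrthonormalBasis ι 𝕜 (EuclideanSpace 𝕜 n)) {d : ι → ℝ}
    (hb : ∀ i, A *ᵥ ⇑(b i) = d i • ⇑(b i)) {c : ℝ} (hc : 0 ≤ c) (hd : ∀ i, |d i| ≤ c)
    (x : n → 𝕜) : ‖toLp 2 (A *ᵥ x)‖ ≤ c * ‖toLp 2 x‖ := by
  have hrepr : ∀ i, b.repr (toLp 2 (A *ᵥ x)) i = d i * b.repr (toLp 2 x) i := by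
    intro i
    have hsymm := isSymmetric_toEuclideanLin_iff.mpr hA (b i) (toLp 2 x)
    simp only [toLpLin_apply, hb] at hsymm
    rw [OrthonormalBasis.repr_apply_apply, OrthonormalBasis.repr_apply_apply, ← hsymm,
      toLp_smul, toLp_ofLp, RCLike.real_smul_eq_coe_smul (K := 𝕜), inner_smul_left,
      RCLike.conj_ofReal]
  rw [← b.repr.norm_map, ← b.repr.norm_map]
  refine le_of_sq_le_sq ?_ (by positivity)
  rw [mul_pow, EuclideanSpace.norm_sq_eq, EuclideanSpace.norm_sq_eq, Finset.mul_sum]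
  gcongr with i
  rw [hrepr, norm_mul, mul_pow, RCLike.norm_ofReal]
  gcongr
  exact hd i

theorem IsHermitian.norm_one_sub_smul_mulVec_le {H : Matrix n n 𝕜} (hH : H.IsHermitian)
    {r c : ℝ} (hc : 0 ≤ c) (hd : ∀ i, |1 - r * hH.eigenvalues i| ≤ c) (x : n → 𝕜) :
    ‖toLp 2 ((1 - r • H) *ᵥ x)‖ ≤ c * ‖toLp 2 x‖ := by
  refine (isHermitian_one.sub (hH.smul (IsSelfAdjoint.all r))).norm_mulVec_le_of_eigenbasis
    hH.eigenvectorBasis (fun i => ?_) hc hd x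
  rw [sub_mulVec, one_mulVec, smul_mulVec, hH.mulVec_eigenvectorBasis, smul_smul, sub_smul,
    one_smul]

theorem IsHermitian.frobenius_norm_mul_one_sub_smul_le {H : Matrix n n 𝕜} (hH : H.IsHermitian)
    {r c : ℝ} (hc : 0 ≤ c) (hd : ∀ i, |1 - r * hH.eigenvalues i| ≤ c) (M : Matrix m n 𝕜) :
    ‖M * (1 - r • H)‖ ≤ c * ‖M‖ := by
  have hA : (1 - r • H)ᴴ = 1 - r • H := (isHermitian_one.sub (hH.smul (IsSelfAdjoint.all r))).eq
  rw [← frobenius_norm_conjTranspose, conjTranspose_mul, hA, ← frobenius_norm_conjTranspose M]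
  exact frobenius_norm_mul_le_of_mulVec_le hc (hH.norm_one_sub_smul_mulVec_le hc hd) Mᴴ

end Matrix

theorem concurrent_learning_uub_under_disturbance_general
    {n q : ℕ} (μ Λ r εbar : ℝ) (hμ : 0 < μ) (hμΛ : μ ≤ Λ)
    (hr0 : 0 < r) (hr : r < 2 * μ / Λ ^ 2)
    (H₂ : ℕ → Matrix (Fin q) (Fin q) ℝ)
    (hherm : ∀ k, (H₂ k).IsHermitian)
    (heig : ∀ k i, μ ≤ (hherm k).eigenvalues i ∧ (hherm k).eigenvalues i ≤ Λ)
    (H₃ : ℕ → Matrix (Fin n) (Fin q) ℝ) (hH₃ : ∀ k, ‖H₃ k‖ ≤ εbar)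
    (Φtilde : ℕ → Matrix (Fin n) (Fin q) ℝ)
    (hdyn : ∀ k, Φtilde (k + 1) = Φtilde k * (1 - r • H₂ k) + r • H₃ k) :
    0 ≤ max (1 - r * μ) (r * Λ - 1) ∧
    max (1 - r * μ) (r * Λ - 1) < 1 ∧
    Filter.limsup (fun k => ‖Φtilde k‖) Filter.atTop ≤
      r * εbar / (1 - max (1 - r * μ) (r * Λ - 1)) ∧
    ∀ (ζ : ℕ → EuclideanSpace ℝ (Fin q)) (ω : ℕ → EuclideanSpace ℝ (Fin n)) (ωb : ℝ),
      (∀ k, ‖ζ k‖ ≤ 1) → (∀ k, ‖ω k‖ ≤ ωb) →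
      ∃ B : ℝ, ∀ᶠ k in Filter.atTop,
        ‖(show EuclideanSpace ℝ (Fin n) from WithLp.toLp 2 (Φtilde k *ᵥ ζ k)) - ω k‖ ≤ B := by
  obtain ⟨hc0, hc1⟩ := max_one_sub_mul_sub_one_mem_Ico hμ hμΛ hr0 hr
  set c := max (1 - r * μ) (r * Λ - 1)
  have hstep : ∀ k, ‖Φtilde (k + 1)‖ ≤ c * ‖Φtilde k‖ + r * εbar := by
    intro k
    rw [hdyn k]
    calc ‖Φtilde k * (1 - r • H₂ k) + r • H₃ k‖
        ≤ ‖Φtilde k * (1 - r • H₂ k)‖ + ‖r • H₃ k‖ := norm_add_le _ _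
      _ ≤ c * ‖Φtilde k‖ + r * εbar := by
        rw [norm_smul, Real.norm_of_nonneg hr0.le]
        gcongr
        · exact (hherm k).frobenius_norm_mul_one_sub_smul_le hc0
            (fun i => abs_one_sub_mul_le_max hr0.le (heig k i).1 (heig k i).2) _
        · exact hH₃ k
  refine ⟨hc0, hc1, limsup_le_div_one_sub_of_le_mul_add hc0 hc1
    (isBoundedUnder_of ⟨0, fun k => norm_nonneg _⟩) hstep, fun ζ ω ωb hζ hω => ?_⟩
  obtain ⟨B, hB⟩ := isBoundedUnder_le_of_le_mul_add (a := fun k => ‖Φtilde k‖) hc0 hc1 hstep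
  refine ⟨B + ωb, (eventually_map.1 hB).mono fun k hk => ?_⟩
  calc ‖toLp 2 (Φtilde k *ᵥ ζ k) - ω k‖ ≤ ‖toLp 2 (Φtilde k *ᵥ ζ k)‖ + ‖ω k‖ := norm_sub_le _ _
    _ ≤ ‖Φtilde k‖ * ‖ζ k‖ + ωb := by
      gcongr
      · simpa using Matrix.frobenius_norm_mulVec (Φtilde k) (ζ k)
      · exact hω k
    _ ≤ B + ωb := by
      gcongr
      exact (mul_le_of_le_one_right (norm_nonneg _) (hζ k)).trans hk

/-- Theorem 1, part ii (uniform ultimate boundedness under disturbance): if the parameter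
error obeys `Φ̃(k+1) = Φ̃(k)·(I − r·H₂(k)) + r·H₃(k)` with symmetric positive-definite
`H₂(k)` whose eigenvalues lie in `[μ, Λ]`, `‖H₃(k)‖_F ≤ ε̄`, and `0 < r < 2μ/Λ²`, then
with `c = max (1 - r*μ) (r*Λ - 1)` one has `0 ≤ c < 1` and
`limsup ‖Φ̃(k)‖_F ≤ r·ε̄/(1 - c)`; in particular the identification error
`e_si(k) = Φ̃(k)ζ̄(k) − ω̄(k)` is uniformly ultimately bounded for bounded `ζ̄, ω̄`. -/
theorem concurrent_learning_uub_under_disturbance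
    {n q : ℕ} (μ Λ r εbar : ℝ) (hμ : 0 < μ) (hμΛ : μ ≤ Λ)
    (hr0 : 0 < r) (hr : r < 2 * μ / Λ ^ 2) (hεbar : 0 ≤ εbar)
    (H₂ : ℕ → Matrix (Fin q) (Fin q) ℝ)
    (hherm : ∀ k, (H₂ k).IsHermitian) (hpos : ∀ k, (H₂ k).PosDef)
    (heig : ∀ k i, μ ≤ (hherm k).eigenvalues i ∧ (hherm k).eigenvalues i ≤ Λ)
    (H₃ : ℕ → Matrix (Fin n) (Fin q) ℝ) (hH₃ : ∀ k, ‖H₃ k‖ ≤ εbar)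
    (Φtilde : ℕ → Matrix (Fin n) (Fin q) ℝ)
    (hdyn : ∀ k, Φtilde (k + 1) = Φtilde k * (1 - r • H₂ k) + r • H₃ k) :
    0 ≤ max (1 - r * μ) (r * Λ - 1) ∧
    max (1 - r * μ) (r * Λ - 1) < 1 ∧
    Filter.limsup (fun k => ‖Φtilde k‖) Filter.atTop ≤
      r * εbar / (1 - max (1 - r * μ) (r * Λ - 1)) ∧
    ∀ (ζ : ℕ → EuclideanSpace ℝ (Fin q)) (ω : ℕ → EuclideanSpace ℝ (Fin n)) (ωb : ℝ),
      (∀ k, ‖ζ k‖ ≤ 1) → (∀ k, ‖ω k‖ ≤ ωb) →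
      ∃ B : ℝ, ∀ᶠ k in Filter.atTop,
        ‖(show EuclideanSpace ℝ (Fin n) from WithLp.toLp 2 (Φtilde k *ᵥ ζ k)) - ω k‖ ≤ B :=
  concurrent_learning_uub_under_disturbance_general μ Λ r εbar hμ hμΛ hr0 hr H₂ hherm heig H₃ hH₃
    Φtilde hdyn
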